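/- arXiv:0905.2713 — 2 statements merged into one kernel-verified Lean document; each statement's English description precedes it below -/
import Mathlib

section
/- Let n ≥ 2 and fix the standard free generating set x_1, …, x_n of the free group F_n. There exists a polynomial p_n with natural-number (or integer) coefficients, depending only on n, such that for every element w of F_n there is an automorphism α of F_n and an index i ∈ {1,…,n} such that the exponent sum of the generator x_i in α(w) is zero and the reduced word length satisfies ℓ(α(w)) ≤ p_n(ℓ(w)). -/
/-!
Run the Euclidean algorithm on the exponent sums `a = X_i(w)`, `b = X_j(w)` with Nielsen
transvections `x_j ↦ x_j x_i^k`: such a map replaces `a` by `a + k b` and fixes `b`, so with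
the balanced remainder `r = a + k b`, `|r| ≤ |b| / 2`, the pair `(a, b)` becomes `(b, r)` after
swapping roles, and the process stops at a zero exponent sum. A step multiplies word length by
at most `|k| + 1 ≤ 5|a| / (2|b|)` while the remainders at least halve, so the total growth is
bounded by the potential `(|a| + 1)(|b| + 1)^6`, polynomial in `ℓ(w)`.
-/
/-- The exponent-sum homomorphism `F_n → ℤ` (written multiplicatively) sending the
generator `x_i` to `1` and all other generators to `0`. -/
def expSum {n : ℕ} (i : Fin n) : FreeGroup (Fin n) →* Multiplicative ℤ :=
  FreeGroup.lift fun j => Multiplicative.ofAdd (if j = i then (1 : ℤ) else 0)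

namespace FreeGroup

variable {α : Type*} [DecidableEq α]

theorem apply_le_mul_norm_of_subadditive {G : Type*} [Group G] (ℓ : G → ℕ) (h_one : ℓ 1 = 0)
    (h_mul : ∀ g h, ℓ (g * h) ≤ ℓ g + ℓ h) (h_inv : ∀ g, ℓ g⁻¹ = ℓ g)
    (φ : FreeGroup α →* G) {C : ℕ} (hC : ∀ a, ℓ (φ (of a)) ≤ C) (w : FreeGroup α) :
    ℓ (φ w) ≤ C * w.norm := by
  suffices ∀ L : List (α × Bool), ℓ (φ (mk L)) ≤ C * L.length by
    simpa only [mk_toWord, norm] using this w.toWord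
  intro L
  induction L with
  | nil => simp [← one_eq_mk, h_one]
  | cons x L ih =>
    have hx : ℓ (φ (mk [x])) ≤ C := by
      obtain ⟨a, _ | _⟩ := x
      · rw [← h_inv, ← _root_.map_inv, inv_mk]
        exact hC a
      · exact hC a
    calc ℓ (φ (mk (x :: L))) = ℓ (φ (mk [x]) * φ (mk L)) := by
          rw [← _root_.map_mul, mul_mk]; rfl
      _ ≤ C + C * L.length := (h_mul _ _).trans (add_le_add hx ih)
      _ = C * (x :: L).length := by simp only [List.length_cons]; ring

theorem norm_map_le_mul_norm {β : Type*} [DecidableEq β] (φ : FreeGroup α →* FreeGroup β)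
    {C : ℕ} (hC : ∀ a, (φ (of a)).norm ≤ C) (w : FreeGroup α) : (φ w).norm ≤ C * w.norm :=
  apply_le_mul_norm_of_subadditive norm norm_one norm_mul_le (fun _ => norm_inv_eq) φ hC w

theorem norm_of_zpow (a : α) (k : ℤ) : (of a ^ k).norm = k.natAbs := by
  obtain ⟨m, rfl | rfl⟩ := Int.eq_nat_or_neg k <;> simp [norm_inv_eq, norm_of_pow]

def transvection (i j : α) (k : ℤ) : FreeGroup α →* FreeGroup α :=
  lift fun l => if l = j then of j * of i ^ k else of l

variable {i j : α}

theorem transvection_of (k : ℤ) (l : α) :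
    transvection i j k (of l) = if l = j then of j * of i ^ k else of l :=
  lift_apply_of

theorem transvection_comp_transvection_neg (hij : i ≠ j) (k : ℤ) :
    (transvection i j k).comp (transvection i j (-k)) = MonoidHom.id _ := by
  ext l
  by_cases hl : l = j
  · subst hl
    simp [transvection_of, hij]
  · simp [transvection_of, hl]

def transvectionEquiv (hij : i ≠ j) (k : ℤ) : FreeGroup α ≃* FreeGroup α :=
  (transvection i j k).toMulEquiv (transvection i j (-k))
    (by simpa using transvection_comp_transvection_neg hij (-k))
    (transvection_comp_transvection_neg hij k)

theorem norm_transvection_le (k : ℤ) (w : FreeGroup α) :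
    (transvection i j k w).norm ≤ (k.natAbs + 1) * w.norm := by
  refine norm_map_le_mul_norm _ (fun l => ?_) w
  rw [transvection_of]
  split_ifs
  · calc (of j * of i ^ k).norm ≤ (of j).norm + (of i ^ k).norm := norm_mul_le _ _
      _ = k.natAbs + 1 := by rw [norm_of, norm_of_zpow, add_comm]
  · simp

end FreeGroup

theorem Int.exists_two_mul_natAbs_add_mul_le (a : ℤ) {b : ℤ} (hb : b ≠ 0) :
    ∃ k : ℤ, 2 * (a + k * b).natAbs ≤ b.natAbs := by
  refine ⟨-a.bdiv b.natAbs * b.sign, ?_⟩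
  have hrem : a + -a.bdiv b.natAbs * b.sign * b = a.bmod b.natAbs := by
    rw [mul_assoc, Int.sign_mul_self_eq_natAbs]
    linarith [Int.bdiv_add_bmod' a b.natAbs]
  have hpos : 0 < b.natAbs := Int.natAbs_pos.mpr hb
  have hlo := Int.le_bmod (x := a) hpos
  have hhi := Int.bmod_le (x := a) hpos
  omega

/-- `6` is the least exponent with `5 · (3/4)^6 < 1`, which is what one balanced Euclid step
needs. -/
def euclidBound (A B : ℕ) : ℕ := (A + 1) * (B + 1) ^ 6

theorem succ_mul_euclidBound_le {A B K R : ℕ} (hB : 1 ≤ B) (hBA : B ≤ A) (hR : 2 * R ≤ B)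
    (hK : K * B ≤ A + R) : (K + 1) * euclidBound B R ≤ euclidBound A B := by
  have hquot : 2 * ((K + 1) * B) ≤ 5 * A := by rw [add_one_mul]; omega
  have hrem : (4 * (R + 1)) ^ 6 ≤ (3 * (B + 1)) ^ 6 := Nat.pow_le_pow_left (by omega) 6
  have hA : A * (B + 1) ≤ 2 * ((A + 1) * B) := by nlinarith
  refine Nat.le_of_mul_le_mul_right ?_ (show 0 < 2 * 4 ^ 6 * B by positivity)
  unfold euclidBound
  calc (K + 1) * ((B + 1) * (R + 1) ^ 6) * (2 * 4 ^ 6 * B)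
      = 2 * ((K + 1) * B) * ((B + 1) * (4 * (R + 1)) ^ 6) := by ring
    _ ≤ 5 * A * ((B + 1) * (3 * (B + 1)) ^ 6) := by gcongr
    _ = 3645 * (A * (B + 1)) * (B + 1) ^ 6 := by ring
    _ ≤ 3645 * (2 * ((A + 1) * B)) * (B + 1) ^ 6 := by gcongr
    _ = 7290 * ((A + 1) * B * (B + 1) ^ 6) := by ring
    _ ≤ 8192 * ((A + 1) * B * (B + 1) ^ 6) := by gcongr; norm_num
    _ = (A + 1) * (B + 1) ^ 6 * (2 * 4 ^ 6 * B) := by ring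

open FreeGroup

variable {n : ℕ}

theorem expSum_of (i l : Fin n) :
    expSum i (of l) = Multiplicative.ofAdd (if l = i then (1 : ℤ) else 0) :=
  lift_apply_of

theorem natAbs_expSum_le_norm (i : Fin n) (w : FreeGroup (Fin n)) :
    (expSum i w).toAdd.natAbs ≤ w.norm := by
  simpa using apply_le_mul_norm_of_subadditive (fun g => g.toAdd.natAbs) rfl
    (fun g h => Int.natAbs_add_le g.toAdd h.toAdd) (fun g => Int.natAbs_neg g.toAdd)
    (expSum i) (C := 1) (fun l => by rw [expSum_of]; split_ifs <;> simp) w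

variable {i j : Fin n}

theorem expSum_comp_transvection_self (hij : i ≠ j) (k : ℤ) :
    (expSum i).comp (transvection i j k) = expSum i * expSum j ^ k := by
  ext l
  by_cases hl : l = j
  · subst hl
    simp [transvection_of, expSum_of, Ne.symm hij]
  · simp [transvection_of, expSum_of, hl]

theorem expSum_comp_transvection_of_ne (hij : i ≠ j) (k : ℤ) :
    (expSum j).comp (transvection i j k) = expSum j := by
  ext l
  by_cases hl : l = j
  · subst hl
    simp [transvection_of, expSum_of, hij]
  · simp [transvection_of, expSum_of, hl]

theorem exists_mulEquiv_expSum_eq_one (hij : i ≠ j) (w : FreeGroup (Fin n))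
    (hle : (expSum j w).toAdd.natAbs ≤ (expSum i w).toAdd.natAbs) :
    ∃ (α : FreeGroup (Fin n) ≃* FreeGroup (Fin n)) (l : Fin n), expSum l (α w) = 1 ∧
      (α w).norm ≤ w.norm * euclidBound (expSum i w).toAdd.natAbs (expSum j w).toAdd.natAbs := by
  induction hB : (expSum j w).toAdd.natAbs using Nat.strong_induction_on generalizing i j w with
  | _ B ih =>
  subst hB
  set a := (expSum i w).toAdd
  set b := (expSum j w).toAdd
  by_cases hb : b = 0
  · refine ⟨MulEquiv.refl _, j, by simpa [b] using hb, ?_⟩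
    exact Nat.le_mul_of_pos_right _ (by unfold euclidBound; positivity)
  obtain ⟨k, hk⟩ := Int.exists_two_mul_natAbs_add_mul_le a hb
  set u := transvectionEquiv hij k w
  have hu_i : (expSum i u).toAdd = a + k * b := by
    simp [u, transvectionEquiv, ← MonoidHom.comp_apply, expSum_comp_transvection_self hij, a, b]
  have hu_j : (expSum j u).toAdd = b := by
    simp [u, transvectionEquiv, ← MonoidHom.comp_apply, expSum_comp_transvection_of_ne hij, b]
  obtain ⟨α, l, hl, hα⟩ :=
    ih (a + k * b).natAbs (by omega) hij.symm u (by rw [hu_i, hu_j]; omega) (by rw [hu_i])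
  refine ⟨(transvectionEquiv hij k).trans α, l, hl, ?_⟩
  have hKB : k.natAbs * b.natAbs ≤ a.natAbs + (a + k * b).natAbs := by
    rw [← Int.natAbs_mul]
    have := Int.natAbs_sub_le (a + k * b) a
    rw [add_sub_cancel_left] at this
    omega
  calc (α u).norm ≤ u.norm * euclidBound b.natAbs (a + k * b).natAbs := by
        rwa [hu_j] at hα
    _ ≤ (k.natAbs + 1) * w.norm * euclidBound b.natAbs (a + k * b).natAbs := by
        gcongr; exact norm_transvection_le k w
    _ ≤ w.norm * euclidBound a.natAbs b.natAbs := by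
        rw [mul_comm _ w.norm, mul_assoc]
        gcongr
        exact succ_mul_euclidBound_le (by omega) hle hk hKB

/-- For each `n ≥ 2` there is a polynomial `p_n` (depending only on `n`) such that every
`w ∈ F_n` can be carried by an automorphism `α` of `F_n` to a word with zero exponent sum
in some generator and of length at most `p_n(ℓ(w))`. -/
theorem exists_automorphism_zero_expSum_poly_bound (n : ℕ) (hn : 2 ≤ n) :
    ∃ p : Polynomial ℕ, ∀ w : FreeGroup (Fin n),
      ∃ (α : FreeGroup (Fin n) ≃* FreeGroup (Fin n)) (i : Fin n),
        expSum i (α w) = 1 ∧ (α w).norm ≤ p.eval w.norm := by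
  refine ⟨Polynomial.X * (Polynomial.X + 1) ^ 7, fun w => ?_⟩
  obtain ⟨i, j, hij, hle⟩ : ∃ i j : Fin n, i ≠ j ∧
      (expSum j w).toAdd.natAbs ≤ (expSum i w).toAdd.natAbs := by
    let x : Fin n := ⟨0, by omega⟩
    let y : Fin n := ⟨1, by omega⟩
    have hxy : x ≠ y := by simp [x, y]
    rcases le_total (expSum y w).toAdd.natAbs (expSum x w).toAdd.natAbs with h | h
    exacts [⟨x, y, hxy, h⟩, ⟨y, x, hxy.symm, h⟩]
  obtain ⟨α, l, hl, hα⟩ := exists_mulEquiv_expSum_eq_one hij w hle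
  refine ⟨α, l, hl, hα.trans ?_⟩
  have hA := natAbs_expSum_le_norm i w
  have hB := natAbs_expSum_le_norm j w
  simp only [Polynomial.eval_mul, Polynomial.eval_pow, Polynomial.eval_add, Polynomial.eval_X,
    Polynomial.eval_one, euclidBound]
  gcongr
  calc _ ≤ (w.norm + 1) * (w.norm + 1) ^ 6 := by gcongr
    _ = (w.norm + 1) ^ 7 := by ring
end

section
/- Let G be a finite group. Then for every n ≥ 1 there exists a word w in the free group F_n such that for all g_1, …, g_n ∈ G, the evaluation of w at (g_1, …, g_n) equals the identity of G if and only if the subgroup of G generated by g_1, …, g_n is solvable. -/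
/-!
For `c` large, evaluation at `g` maps the `c`-th derived subgroup `W` of `F_n` onto the stable
term of the derived series of `⟨g⟩`, which is trivial exactly when `⟨g⟩` is solvable; so every
`w ∈ W` vanishes on solvable tuples. Evaluating at all non-solvable tuples at once maps `W` onto
a finite perfect group `Q`, in which the coordinate kernels are proper normal subgroups, and it
remains to find an element of `Q` outside all of them. Enlarge them to distinct maximal normal
subgroups `Mᵢ`. As `Q ⧸ M` is perfect, two normal subgroups supplementing `M` cannot commute
modulo `M`; by induction this gives `⋂_{i ∈ S} Mᵢ ⊄ M` for every maximal normal `M` outside `S`,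
and an element avoiding every `Mᵢ` is then built one factor at a time.
-/
open Filter

section DerivedSeries
variable {Γ A : Type*} [Group Γ] [Group A]

theorem map_derivedSeries_antitone (f : Γ →* A) :
    Antitone fun m => (derivedSeries Γ m).map f :=
  fun _ _ h => Subgroup.map_mono (derivedSeries_antitone Γ h)

theorem map_derivedSeries_eq_map_subtype (f : Γ →* A) (m : ℕ) :
    (derivedSeries Γ m).map f = (derivedSeries f.range m).map f.range.subtype := by
  rw [← map_derivedSeries_eq f.rangeRestrict_surjective, Subgroup.map_map,
    MonoidHom.subtype_comp_rangeRestrict]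

theorem isSolvable_range_iff_exists_map_derivedSeries_eq_bot (f : Γ →* A) :
    Group.IsSolvable f.range ↔ ∃ m, (derivedSeries Γ m).map f = ⊥ := by
  refine (Group.isSolvable_def _).trans (exists_congr fun m => ?_)
  rw [map_derivedSeries_eq_map_subtype,
    Subgroup.map_eq_bot_iff_of_injective _ f.range.subtype_injective]

theorem eventually_map_derivedSeries_eq_bot_iff (f : Γ →* A) :
    ∀ᶠ m in atTop, ((derivedSeries Γ m).map f = ⊥ ↔ Group.IsSolvable f.range) := by
  rw [isSolvable_range_iff_exists_map_derivedSeries_eq_bot]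
  by_cases h : ∃ k, (derivedSeries Γ k).map f = ⊥
  · obtain ⟨k, hk⟩ := h
    filter_upwards [eventually_ge_atTop k] with m hm
    exact iff_of_true (le_bot_iff.mp (hk ▸ map_derivedSeries_antitone f hm)) ⟨k, hk⟩
  · exact .of_forall fun m => iff_of_false (fun hm => h ⟨m, hm⟩) h

theorem eventually_map_lift_derivedSeries_eq_bot_iff {α : Type*} (g : α → A) :
    ∀ᶠ m in atTop, ((derivedSeries (FreeGroup α) m).map (FreeGroup.lift g) = ⊥ ↔
      Group.IsSolvable (Subgroup.closure (Set.range g))) := by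
  rw [← FreeGroup.range_lift_eq_closure]
  exact eventually_map_derivedSeries_eq_bot_iff _

theorem eventually_map_derivedSeries_succ_eq [Finite A] (f : Γ →* A) :
    ∀ᶠ m in atTop, (derivedSeries Γ (m + 1)).map f = (derivedSeries Γ m).map f := by
  obtain ⟨k, hk⟩ := WellFoundedLT.antitone_chain_condition (map_derivedSeries_antitone f)
  filter_upwards [eventually_ge_atTop k] with m hm
  rw [← hk m hm, ← hk (m + 1) (hm.trans m.le_succ)]

end DerivedSeries

section PerfectGroup
variable {Q : Type*} [Group Q]

def IsMaximalNormal (M : Subgroup Q) : Prop :=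
  Maximal (fun K : Subgroup Q => K.Normal ∧ K ≠ ⊤) M

theorem IsMaximalNormal.normal {M : Subgroup Q} (hM : IsMaximalNormal M) : M.Normal :=
  hM.prop.1

theorem IsMaximalNormal.ne_top {M : Subgroup Q} (hM : IsMaximalNormal M) : M ≠ ⊤ :=
  hM.prop.2

theorem IsMaximalNormal.sup_eq_top {M D : Subgroup Q} (hM : IsMaximalNormal M) [D.Normal]
    (hDM : ¬ D ≤ M) : D ⊔ M = ⊤ := by
  have := hM.normal
  by_contra h
  exact hDM (hM.eq_of_le ⟨inferInstance, h⟩ le_sup_right ▸ le_sup_left)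

theorem IsMaximalNormal.not_le {M K : Subgroup Q} (hM : IsMaximalNormal M)
    (hK : IsMaximalNormal K) (hKM : K ≠ M) : ¬ K ≤ M :=
  fun h => hKM (hK.eq_of_le hM.prop h)

theorem exists_isMaximalNormal_le [Finite Q] {N : Subgroup Q} [N.Normal] (hN : N ≠ ⊤) :
    ∃ M, IsMaximalNormal M ∧ N ≤ M := by
  obtain ⟨M, hNM, hM⟩ := Finite.exists_le_maximal (p := fun K : Subgroup Q => K.Normal ∧ K ≠ ⊤)
    ⟨inferInstance, hN⟩
  exact ⟨M, hM, hNM⟩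

theorem not_commutator_le_of_sup_eq_top (hQ : commutator Q = ⊤) {M D K : Subgroup Q}
    [M.Normal] (hM : M ≠ ⊤) (hD : D ⊔ M = ⊤) (hK : K ⊔ M = ⊤) : ¬ ⁅D, K⁆ ≤ M := by
  intro hDK
  let π := QuotientGroup.mk' M
  have map_eq_top : ∀ {H : Subgroup Q}, H ⊔ M = ⊤ → H.map π = ⊤ := fun {H} hH => by
    rw [← sup_bot_eq (H.map π), ← (QuotientGroup.map_mk'_self M), ← Subgroup.map_sup, hH,
      ← MonoidHom.range_eq_map, MonoidHom.range_eq_top.mpr (QuotientGroup.mk'_surjective M)]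
  -- the image of the perfect group `Q` in `Q ⧸ M` would be abelian
  have hbot : (commutator Q).map π ≤ ⊥ := calc
    (commutator Q).map π = ⁅D.map π, K.map π⁆ := by
      rw [commutator_def, Subgroup.map_commutator, map_eq_top (top_sup_eq M), map_eq_top hD,
        map_eq_top hK]
    _ = ⁅D, K⁆.map π := (Subgroup.map_commutator _ _ _).symm
    _ ≤ M.map π := Subgroup.map_mono hDK
    _ = ⊥ := QuotientGroup.map_mk'_self M
  rw [le_bot_iff, Subgroup.map_eq_bot_iff, QuotientGroup.ker_mk', hQ, top_le_iff] at hbot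
  exact hM hbot

theorem not_biInf_le_of_isMaximalNormal (hQ : commutator Q = ⊤) {s : Finset (Subgroup Q)}
    (hs : ∀ K ∈ s, IsMaximalNormal K) {M : Subgroup Q} (hM : IsMaximalNormal M) (hMs : M ∉ s) :
    ¬ ⨅ K ∈ s, K ≤ M := by
  classical
  induction s using Finset.induction_on with
  | empty => simpa using hM.ne_top
  | insert K s _ ih =>
    rw [Finset.forall_mem_insert] at hs
    rw [Finset.mem_insert, not_or] at hMs
    have : (⨅ K ∈ s, K).Normal :=
      Subgroup.normal_iInf_normal fun K => Subgroup.normal_iInf_normal fun hK => (hs.2 K hK).normal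
    have := hs.1.normal
    have := hM.normal
    rw [Finset.iInf_insert]
    exact fun h => not_commutator_le_of_sup_eq_top hQ hM.ne_top
      (hM.sup_eq_top (hM.not_le hs.1 (Ne.symm hMs.1))) (hM.sup_eq_top (ih hs.2 hMs.2))
      ((Subgroup.commutator_le_inf _ _).trans h)

theorem exists_forall_notMem_of_isMaximalNormal (hQ : commutator Q = ⊤)
    (s : Finset (Subgroup Q)) (hs : ∀ K ∈ s, IsMaximalNormal K) : ∃ q : Q, ∀ K ∈ s, q ∉ K := by
  classical
  induction s using Finset.induction_on with
  | empty => exact ⟨1, by simp⟩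
  | insert K s hKs ih =>
    rw [Finset.forall_mem_insert] at hs
    obtain ⟨q, hq⟩ := ih hs.2
    obtain ⟨d, hd, hdK⟩ :=
      SetLike.not_le_iff_exists.mp (not_biInf_le_of_isMaximalNormal hQ hs.2 hs.1 hKs)
    simp only [Subgroup.mem_iInf] at hd
    simp only [Finset.forall_mem_insert]
    by_cases hqK : q ∈ K
    · exact ⟨q * d, fun h => hdK ((K.mul_mem_cancel_left hqK).mp h),
        fun K' hK' h => hq K' hK' ((K'.mul_mem_cancel_right (hd K' hK')).mp h)⟩
    · exact ⟨q, hqK, hq⟩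

theorem exists_forall_notMem_of_commutator_eq_top [Finite Q] (hQ : commutator Q = ⊤) {ι : Type*}
    [Finite ι] (N : ι → Subgroup Q) [∀ i, (N i).Normal] (hN : ∀ i, N i ≠ ⊤) :
    ∃ q : Q, ∀ i, q ∉ N i := by
  classical
  have := Fintype.ofFinite ι
  choose M hM hNM using fun i => exists_isMaximalNormal_le (hN i)
  obtain ⟨q, hq⟩ :=
    exists_forall_notMem_of_isMaximalNormal hQ (Finset.univ.image M) (by simpa using hM)
  exact ⟨q, fun i h => hq (M i) (Finset.mem_image_of_mem M (Finset.mem_univ i)) (hNM i h)⟩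

end PerfectGroup

theorem exists_word_detecting_solvability_general (G : Type*) [Group G] [Finite G] (n : ℕ) :
    ∃ w : FreeGroup (Fin n), ∀ g : Fin n → G,
      FreeGroup.lift g w = 1 ↔ IsSolvable (Subgroup.closure (Set.range g)) := by
  let ι := {g : Fin n → G // ¬ Group.IsSolvable (Subgroup.closure (Set.range g))}
  let F : FreeGroup (Fin n) →* (ι → G) := MonoidHom.pi fun g => FreeGroup.lift g.1
  obtain ⟨c, hsolv, hperf⟩ := ((eventually_all.2 fun g : Fin n → G =>
    eventually_map_lift_derivedSeries_eq_bot_iff g).and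
    (eventually_map_derivedSeries_succ_eq F)).exists
  set W := derivedSeries (FreeGroup (Fin n)) c
  set Q := W.map F
  have hQ : commutator Q = ⊤ := Subgroup.map_injective Q.subtype_injective <| by
    rw [Subgroup.map_subtype_commutator, ← MonoidHom.range_eq_map, Q.range_subtype,
      ← Subgroup.map_commutator, ← derivedSeries_succ, hperf]
  let N (g : ι) : Subgroup Q := ((Pi.evalMonoidHom _ g).comp Q.subtype).ker
  have hN (g : ι) : N g ≠ ⊤ := by
    obtain ⟨_, ⟨w, hw, rfl⟩, hgw⟩ := (Subgroup.bot_or_exists_ne_one _).resolve_left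
      ((hsolv g).not.mpr g.2)
    exact fun h => hgw ((Subgroup.eq_top_iff' _).mp h ⟨F w, w, hw, rfl⟩)
  obtain ⟨⟨_, w, hw, rfl⟩, hq⟩ := exists_forall_notMem_of_commutator_eq_top hQ N hN
  refine ⟨w, fun g => ⟨fun h => by_contra fun hg => hq ⟨g, hg⟩ h, fun hg => ?_⟩⟩
  exact Subgroup.mem_bot.mp ((hsolv g).2 hg ▸ Subgroup.mem_map_of_mem _ hw)

/-- For every finite group `G` and every `n ≥ 1` there is a word `w ∈ F_n` such that a
tuple `g : Fin n → G` satisfies `w` (i.e. evaluates to the identity) if and only if the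
subgroup generated by the `g i` is solvable. -/
theorem exists_word_detecting_solvability (G : Type*) [Group G] [Finite G]
    (n : ℕ) (hn : 1 ≤ n) :
    ∃ w : FreeGroup (Fin n), ∀ g : Fin n → G,
      FreeGroup.lift g w = 1 ↔ IsSolvable (Subgroup.closure (Set.range g)) :=
  exists_word_detecting_solvability_general G n
end
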